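/- arXiv:2101.02418 — 5 statements merged into one kernel-verified Lean document; each statement's English description precedes it below -/
import Mathlib

section
/- The fully invariant congruence FIC{(x³, x²), (x²y, xyx), (xyx, yx²)} on F equals the fully invariant congruence FIC{(x³yz, yxzx)} generated by the single pair (x³yz, yxzx). (Equivalently: the monoid variety D = var{x² ≈ x³, x²y ≈ xyx ≈ yx²} can be defined by the single identity x³yz ≈ yxzx.) -/
/-!
Substituting `1` for `y` and `z`, `1` for `z`, and `1` for `y` together with `y` for `z` in
`x³yz ≈ yxzx` gives `x³ ≈ x²`, `x³y ≈ yx²` and `x³y ≈ xyx`, from which the identities of `D`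
follow. Conversely, in `D` the square `x²` absorbs a further `x` and commutes with every letter,
so `x³yz ≈ x²yz ≈ yx²z ≈ yxzx`, the last step being `x²y ≈ xyx` with `z` for `y`.
-/

/-- The free monoid on countably many generators. -/
abbrev F : Type := FreeMonoid ℕ

/-- The fixed pairwise distinct generators. -/
def x : F := FreeMonoid.of 0
def y : F := FreeMonoid.of 1
def z : F := FreeMonoid.of 2
def t : F := FreeMonoid.of 3

/-- A congruence on `F` is fully invariant if it is stable under every
monoid endomorphism of `F`. -/
def IsFullyInvariant (c : Con F) : Prop :=
  ∀ ξ : F →* F, ∀ u v : F, c u v → c (ξ u) (ξ v)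

/-- The type of fully invariant congruences on `F`. -/
abbrev FICon : Type := {c : Con F // IsFullyInvariant c}

instance : InfSet FICon :=
  ⟨fun S => ⟨sInf (Subtype.val '' S), fun ξ u v h c hc => by
    obtain ⟨d, hd, rfl⟩ := hc
    exact d.2 ξ u v (h d.1 ⟨d, hd, rfl⟩)⟩⟩

/-- The complete lattice of fully invariant congruences on `F`:
meets are intersections, joins are the smallest fully invariant congruences
containing the union, `⊥` is the equality relation and `⊤` is the all relation. -/
noncomputable instance : CompleteLattice FICon :=
  completeLatticeOfInf FICon (fun S =>
    ⟨fun c hc => fun u v h => h c.1 ⟨c, hc, rfl⟩,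
     fun c hc => fun u v h d hd => by
        obtain ⟨e, he, rfl⟩ := hd
        exact hc he h⟩)

/-- `fic S` is the smallest fully invariant congruence on `F` containing the
set `S` of pairs of words. -/
noncomputable def fic (S : Set (F × F)) : FICon :=
  sInf {c : FICon | ∀ p ∈ S, c.1 p.1 p.2}

theorem fic_rel_of_mem {S : Set (F × F)} {u v : F} (h : (u, v) ∈ S) : (fic S).1 u v :=
  fun _ ⟨_, hd, hdc⟩ => hdc ▸ hd (u, v) h

theorem fic_le_iff {S : Set (F × F)} {c : FICon} : fic S ≤ c ↔ ∀ p ∈ S, c.1 p.1 p.2 :=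
  ⟨fun h _ hp => h (fic_rel_of_mem hp), fun h => sInf_le h⟩

section

variable {c : Con F}

theorem IsFullyInvariant.rel_x3yz_of_sigmaD (hc : IsFullyInvariant c)
    (h₁ : c (x ^ 3) (x ^ 2)) (h₂ : c (x ^ 2 * y) (x * y * x))
    (h₃ : c (x * y * x) (y * x ^ 2)) : c (x ^ 3 * y * z) (y * x * z * x) := by
  have hx2z : c (x ^ 2 * z) (x * z * x) := by
    simpa [x, y, z] using hc (FreeMonoid.lift fun n => if n = 1 then z else x) _ _ h₂
  have hx3yz : c (x ^ 3 * y * z) (x ^ 2 * y * z) := c.mul (c.mul h₁ (c.refl y)) (c.refl z)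
  have hx2yz : c (x ^ 2 * y * z) (y * x ^ 2 * z) := c.mul (c.trans h₂ h₃) (c.refl z)
  have hyx2z : c (y * x ^ 2 * z) (y * x * z * x) := by
    simpa only [mul_assoc] using c.mul (c.refl y) hx2z
  exact c.trans (c.trans hx3yz hx2yz) hyx2z

theorem IsFullyInvariant.sigmaD_of_rel_x3yz (hc : IsFullyInvariant c)
    (h : c (x ^ 3 * y * z) (y * x * z * x)) :
    c (x ^ 3) (x ^ 2) ∧ c (x ^ 2 * y) (x * y * x) ∧ c (x * y * x) (y * x ^ 2) := by
  have hx3 : c (x ^ 3) (x ^ 2) := by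
    simpa [x, y, z, pow_succ] using hc (FreeMonoid.lift fun n => if n = 0 then x else 1) _ _ h
  have hx3y_yx2 : c (x ^ 3 * y) (y * x ^ 2) := by
    simpa [x, y, z, pow_succ, mul_assoc] using
      hc (FreeMonoid.lift fun n => if n = 2 then 1 else FreeMonoid.of n) _ _ h
  have hx3y_xyx : c (x ^ 3 * y) (x * y * x) := by
    simpa [x, y, z, pow_succ, mul_assoc] using
      hc (FreeMonoid.lift fun n => if n = 0 then x else if n = 2 then y else 1) _ _ h
  have hx2y : c (x ^ 2 * y) (x ^ 3 * y) := c.symm (c.mul hx3 (c.refl y))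
  exact ⟨hx3, c.trans hx2y hx3y_xyx, c.trans (c.symm hx3y_xyx) hx3y_yx2⟩

end

/-- The monoid variety `D = var{x² ≈ x³, x²y ≈ xyx ≈ yx²}` can be defined by
the single identity `x³yz ≈ yxzx`: the corresponding fully invariant
congruences on `F` coincide. -/
theorem sigmaD_eq_single :
    fic {(x ^ 3, x ^ 2), (x ^ 2 * y, x * y * x), (x * y * x, y * x ^ 2)} =
      fic {(x ^ 3 * y * z, y * x * z * x)} := by
  apply le_antisymm
  · obtain ⟨h₁, h₂, h₃⟩ :=
      (fic _).2.sigmaD_of_rel_x3yz (fic_rel_of_mem (Set.mem_singleton _))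
    simpa [fic_le_iff] using ⟨h₁, h₂, h₃⟩
  · refine fic_le_iff.2 ?_
    simpa using (fic _).2.rel_x3yz_of_sigmaD (fic_rel_of_mem (by simp))
      (fic_rel_of_mem (by simp)) (fic_rel_of_mem (by simp))
end

section
/- The fully invariant congruences on F that contain σ_D are exactly σ_D, σ_C2, σ_SL and ⊤, and these four are pairwise distinct with σ_D ⊊ σ_C2 ⊊ σ_SL ⊊ ⊤. (Equivalently: the subvariety lattice of the monoid variety D is the four-element chain T ⊂ SL ⊂ C2 ⊂ D.) -/
noncomputable def sigmaSL : FICon := fic {(x ^ 2, x), (x * y, y * x)}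

noncomputable def sigmaC2 : FICon := fic {(x ^ 3, x ^ 2), (x * y, y * x)}

noncomputable def sigmaD : FICon :=
  fic {(x ^ 3, x ^ 2), (x ^ 2 * y, x * y * x), (x * y * x, y * x ^ 2)}

/-!
A fully invariant congruence `c` is the equational theory of its quotient monoid `F ⧸ c`, so
`fic S ≤ c` says exactly that `F ⧸ c` satisfies the identities `S`. In a monoid of the variety D
squares are central, `m³ = m²` and `m n m = m² n`; hence a word evaluates to the product of the
squares of its repeated letters followed by its linear letters (those occurring once) in their
order. So σ_D identifies two words as soon as they agree in the number of occurrences of each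
letter capped at `2` and in their sequence of linear letters; σ_C2 drops the order and σ_SL the
multiplicities.

Let `c ≥ σ_D` relate two words `u`, `v`. If the capped counts of some letter `a` differ, sending
`a` to `m` and all other letters to `1` gives `m ^ p = m ^ q` in `F ⧸ c` with `min p 2 ≠ min q 2`,
which forces `m² = m` and then commutativity: `c ≥ σ_SL`. If only the linear letters come in
different orders, some two of them `a, b` appear as `a … b` in `u` and `b … a` in `v`; sending
them to `m, n` and the rest to `1` gives `m n = n m`: `c ≥ σ_C2`. Above σ_SL, a letter occurring
in only one of the words yields `m = 1`, so `c = ⊤`. Small finite monoids separate the four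
congruences.
-/

def identities (M : Type*) [Monoid M] : FICon :=
  ⟨{ r := fun u v => ∀ φ : F →* M, φ u = φ v
     iseqv := ⟨fun _ _ => rfl, fun h φ => (h φ).symm, fun h₁ h₂ φ => (h₁ φ).trans (h₂ φ)⟩
     mul' := fun h₁ h₂ φ => by rw [map_mul, map_mul, h₁ φ, h₂ φ] },
    fun ξ _ _ h φ => h (φ.comp ξ)⟩

theorem identities_rel_iff {M : Type*} [Monoid M] {u v : F} :
    (identities M).1 u v ↔ ∀ φ : F →* M, φ u = φ v :=
  Iff.rfl

theorem identities_quotient (c : FICon) : identities c.1.Quotient = c := by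
  refine Subtype.ext (Con.ext fun u v => ⟨fun h => c.1.eq.1 (h c.1.mk'), fun h φ => ?_⟩)
  choose w hw using fun k => c.1.mk'_surjective (φ (FreeMonoid.of k))
  have hφ : φ = c.1.mk'.comp (FreeMonoid.lift w) := FreeMonoid.hom_eq fun k => (hw k).symm
  rw [hφ]
  exact c.1.eq.2 (c.2 _ u v h)

theorem rel_iff_forall_prod_map_eq (c : FICon) {u v : F} :
    c.1 u v ↔ ∀ g : ℕ → c.1.Quotient, (u.toList.map g).prod = (v.toList.map g).prod := by
  calc c.1 u v ↔ (identities c.1.Quotient).1 u v := by rw [identities_quotient]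
    _ ↔ ∀ g, FreeMonoid.lift g u = FreeMonoid.lift g v := FreeMonoid.lift.forall_congr_right.symm
    _ ↔ _ := by simp only [FreeMonoid.lift_apply]

theorem top_rel (u v : F) : (⊤ : FICon).1 u v :=
  (le_top : (⟨⊤, fun _ _ _ _ => trivial⟩ : FICon) ≤ ⊤) trivial

theorem eq_top_of_subsingleton (c : FICon) [Subsingleton c.1.Quotient] : c = ⊤ :=
  eq_top_iff.2 fun _ _ _ => c.1.eq.1 (Subsingleton.elim _ _)

def evalXY {M : Type*} [Monoid M] (m n : M) : F →* M :=
  FreeMonoid.lift fun k => if k = 0 then m else n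

@[simp] theorem evalXY_x {M : Type*} [Monoid M] (m n : M) : evalXY m n x = m := rfl

@[simp] theorem evalXY_y {M : Type*} [Monoid M] (m n : M) : evalXY m n y = n := rfl

structure InVarietyD (M : Type*) [Monoid M] : Prop where
  pow_three_eq_sq : ∀ m : M, m ^ 3 = m ^ 2
  sq_mul_eq_mul_mul : ∀ m n : M, m ^ 2 * n = m * n * m
  mul_mul_eq_mul_sq : ∀ m n : M, m * n * m = n * m ^ 2

structure InVarietyC2 (M : Type*) [Monoid M] : Prop where
  pow_three_eq_sq : ∀ m : M, m ^ 3 = m ^ 2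
  mul_comm : ∀ m n : M, m * n = n * m

structure InVarietySL (M : Type*) [Monoid M] : Prop where
  sq_eq : ∀ m : M, m ^ 2 = m
  mul_comm : ∀ m n : M, m * n = n * m

section Identities

variable {M : Type*} [Monoid M]

theorem sigmaD_le_identities_iff : sigmaD ≤ identities M ↔ InVarietyD M := by
  simp only [sigmaD, fic_le_iff, Set.forall_mem_insert, Set.mem_singleton_iff, forall_eq,
    identities_rel_iff, map_mul, map_pow]
  exact ⟨fun ⟨h₁, h₂, h₃⟩ => ⟨fun m => by simpa using h₁ (evalXY m m),
    fun m n => by simpa using h₂ (evalXY m n), fun m n => by simpa using h₃ (evalXY m n)⟩,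
    fun h => ⟨fun _ => h.pow_three_eq_sq _, fun _ => h.sq_mul_eq_mul_mul _ _,
      fun _ => h.mul_mul_eq_mul_sq _ _⟩⟩

theorem sigmaC2_le_identities_iff : sigmaC2 ≤ identities M ↔ InVarietyC2 M := by
  simp only [sigmaC2, fic_le_iff, Set.forall_mem_insert, Set.mem_singleton_iff, forall_eq,
    identities_rel_iff, map_mul, map_pow]
  exact ⟨fun ⟨h₁, h₂⟩ => ⟨fun m => by simpa using h₁ (evalXY m m),
    fun m n => by simpa using h₂ (evalXY m n)⟩,
    fun h => ⟨fun _ => h.pow_three_eq_sq _, fun _ => h.mul_comm _ _⟩⟩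

theorem sigmaSL_le_identities_iff : sigmaSL ≤ identities M ↔ InVarietySL M := by
  simp only [sigmaSL, fic_le_iff, Set.forall_mem_insert, Set.mem_singleton_iff, forall_eq,
    identities_rel_iff, map_mul, map_pow]
  exact ⟨fun ⟨h₁, h₂⟩ => ⟨fun m => by simpa using h₁ (evalXY m m),
    fun m n => by simpa using h₂ (evalXY m n)⟩,
    fun h => ⟨fun _ => h.sq_eq _, fun _ => h.mul_comm _ _⟩⟩

theorem InVarietySL.inVarietyC2 (hM : InVarietySL M) : InVarietyC2 M :=
  ⟨fun m => by rw [pow_succ, hM.sq_eq, ← pow_two, hM.sq_eq], hM.mul_comm⟩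

theorem InVarietyC2.inVarietyD (hM : InVarietyC2 M) : InVarietyD M :=
  ⟨hM.pow_three_eq_sq, fun m n => by rw [pow_two, mul_assoc, mul_assoc, hM.mul_comm n m],
    fun m n => by rw [hM.mul_comm m n, mul_assoc, ← pow_two]⟩

end Identities

theorem sigmaD_le_iff {c : FICon} : sigmaD ≤ c ↔ InVarietyD c.1.Quotient := by
  rw [← sigmaD_le_identities_iff, identities_quotient]

theorem sigmaC2_le_iff {c : FICon} : sigmaC2 ≤ c ↔ InVarietyC2 c.1.Quotient := by
  rw [← sigmaC2_le_identities_iff, identities_quotient]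

theorem sigmaSL_le_iff {c : FICon} : sigmaSL ≤ c ↔ InVarietySL c.1.Quotient := by
  rw [← sigmaSL_le_identities_iff, identities_quotient]

theorem sigmaD_le_sigmaC2 : sigmaD ≤ sigmaC2 :=
  sigmaD_le_iff.2 (sigmaC2_le_iff.1 le_rfl).inVarietyD

theorem sigmaC2_le_sigmaSL : sigmaC2 ≤ sigmaSL :=
  sigmaC2_le_iff.2 (sigmaSL_le_iff.1 le_rfl).inVarietyC2

section Words

variable {α : Type*} [DecidableEq α]

def cappedCount (l : List α) (a : α) : ℕ := min (l.count a) 2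

def linearPart (l : List α) : List α := l.filter fun a => l.count a = 1

theorem min_count_eq_of_cappedCount_eq {l m : List α} (h : cappedCount l = cappedCount m)
    (a : α) : min (l.count a) 2 = min (m.count a) 2 :=
  congrFun h a

theorem mem_linearPart {l : List α} {a : α} : a ∈ linearPart l ↔ l.count a = 1 := by
  rw [linearPart, List.mem_filter, decide_eq_true_iff, and_iff_right_iff_imp]
  intro h
  exact List.count_pos_iff.1 (by omega)

theorem nodup_linearPart (l : List α) : (linearPart l).Nodup :=
  List.nodup_iff_count_le_one.2 fun a => by
    by_cases h : l.count a = 1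
    · rw [linearPart, List.count_filter (by simpa using h), h]
    · rw [List.count_eq_zero.2 (mt mem_linearPart.1 h)]
      omega

theorem count_eq_one_iff_of_cappedCount_eq {l m : List α} (h : cappedCount l = cappedCount m)
    (a : α) : l.count a = 1 ↔ m.count a = 1 := by
  have := min_count_eq_of_cappedCount_eq h a
  omega

theorem perm_linearPart {l m : List α} (h : cappedCount l = cappedCount m) :
    (linearPart l).Perm (linearPart m) :=
  (List.perm_ext_iff_of_nodup (nodup_linearPart l) (nodup_linearPart m)).2 fun a => by
    rw [mem_linearPart, mem_linearPart, count_eq_one_iff_of_cappedCount_eq h]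

theorem count_filter_ne (l : List α) (a b : α) :
    (l.filter (· ≠ a)).count b = if b = a then 0 else l.count b := by
  split_ifs with hb
  · subst hb
    simp [List.count_eq_zero]
  · exact List.count_filter (by simpa using hb)

theorem cappedCount_filter_ne {l m : List α} (h : cappedCount l = cappedCount m) (a : α) :
    cappedCount (l.filter (· ≠ a)) = cappedCount (m.filter (· ≠ a)) := by
  funext b
  simp only [cappedCount, count_filter_ne]
  split_ifs
  · rfl
  · exact congrFun h b

theorem linearPart_filter_ne {l : List α} {a : α} (ha : 2 ≤ l.count a) :
    linearPart (l.filter (· ≠ a)) = linearPart l := by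
  rw [linearPart, linearPart, List.filter_filter]
  refine List.filter_congr fun b _ => ?_
  by_cases hb : b = a
  · subst hb
    simp only [ne_eq, decide_not, not_true_eq_false, decide_false, Bool.and_false,
      false_eq_decide_iff]
    omega
  · simp [hb]

theorem linearPart_eq_self {l : List α} (h : ∀ a, l.count a < 2) : linearPart l = l :=
  List.filter_eq_self.2 fun a ha => by
    have := List.count_pos_iff.2 ha
    have := h a
    simp only [decide_eq_true_eq]
    omega

theorem exists_eq_append_cons_append_cons {l : List α} {a : α} (h : 2 ≤ l.count a) :
    ∃ p q r, l = p ++ a :: (q ++ a :: r) := by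
  obtain ⟨r₁, r₂, rfl, h₁, h₂⟩ :=
    List.cons_sublist_iff.1 (List.duplicate_iff_sublist.1 (List.duplicate_iff_two_le_count.2 h))
  obtain ⟨p, q, rfl⟩ := List.append_of_mem h₁
  obtain ⟨q', r, rfl⟩ := List.append_of_mem (List.singleton_sublist.1 h₂)
  exact ⟨p, q ++ q', r, by simp⟩

theorem exists_sublist_swap_of_perm {l₁ l₂ : List α} (hp : l₁.Perm l₂) (hne : l₁ ≠ l₂) :
    ∃ a b, a ≠ b ∧ [a, b].Sublist l₁ ∧ [b, a].Sublist l₂ := by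
  induction l₁ generalizing l₂ with
  | nil => exact absurd (List.nil_perm.1 hp).symm hne
  | cons c t ih =>
    obtain _ | ⟨c', t'⟩ := l₂
    · exact absurd hp.length_eq (by simp)
    by_cases hc : c = c'
    · subst hc
      obtain ⟨a, b, hab, h₁, h₂⟩ := ih hp.cons_inv fun h => hne (h ▸ rfl)
      exact ⟨a, b, hab, h₁.cons c, h₂.cons c⟩
    · have hmem₁ : c' ∈ t := by simpa [Ne.symm hc] using hp.mem_iff.2 List.mem_cons_self
      have hmem₂ : c ∈ t' := by simpa [hc] using hp.mem_iff.1 List.mem_cons_self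
      exact ⟨c, c', hc, (List.singleton_sublist.2 hmem₁).cons_cons c,
        (List.singleton_sublist.2 hmem₂).cons_cons c'⟩

end Words

section Evaluation

variable {M : Type*} [Monoid M] {α : Type*}

theorem prod_map_filter (p : α → Prop) [DecidablePred p] (g : α → M) (l : List α) :
    ((l.filter p).map g).prod = (l.map fun k => if p k then g k else 1).prod := by
  induction l with
  | nil => rfl
  | cons b l ih => by_cases hb : p b <;> simp [hb, ih]

variable [DecidableEq α]

theorem prod_map_ite_eq_pow (m : M) (a : α) (l : List α) :
    (l.map fun k => if k = a then m else 1).prod = m ^ l.count a := by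
  rw [← prod_map_filter, List.filter_eq, List.map_replicate, List.prod_replicate]

theorem prod_map_eq_mul_of_sublist {l : List α} (hl : l.Nodup) {a b : α}
    (hs : [a, b].Sublist l) {g : α → M} (hg : ∀ k, k ≠ a → k ≠ b → g k = 1) :
    (l.map g).prod = g a * g b := by
  have hsub : [a, b].Sublist (l.filter (· ∈ [a, b])) := by simpa using hs.filter (· ∈ [a, b])
  have hlen : (l.filter (· ∈ [a, b])).length ≤ [a, b].length :=
    ((hl.filter _).subperm fun k hk => by simpa using (List.mem_filter.1 hk).2).length_le
  have hfilter : (l.map g).prod = ((l.filter (· ∈ [a, b])).map g).prod := by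
    rw [prod_map_filter]
    refine congrArg _ (List.map_congr_left fun k _ => ?_)
    split_ifs with hk
    · rfl
    · simp only [List.mem_cons, List.not_mem_nil, or_false, not_or] at hk
      exact hg k hk.1 hk.2
  rw [hfilter, ← hsub.eq_of_length_le hlen]
  simp

theorem prod_map_linearPart_eq {l m : List α} (hc : cappedCount l = cappedCount m)
    (h : ∀ g : α → M, (l.map g).prod = (m.map g).prod) (g : α → M) :
    ((linearPart l).map g).prod = ((linearPart m).map g).prod := by
  have hm : linearPart m = m.filter fun k => l.count k = 1 :=
    List.filter_congr fun k _ => by simp [count_eq_one_iff_of_cappedCount_eq hc]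
  rw [linearPart, hm, prod_map_filter, prod_map_filter]
  exact h _

theorem mul_comm_of_forall_prod_map_eq {l₁ l₂ : List α} (h₁ : l₁.Nodup) (h₂ : l₂.Nodup)
    (hp : l₁.Perm l₂) (hne : l₁ ≠ l₂) (h : ∀ g : α → M, (l₁.map g).prod = (l₂.map g).prod)
    (m n : M) : m * n = n * m := by
  obtain ⟨a, b, hab, hs₁, hs₂⟩ := exists_sublist_swap_of_perm hp hne
  let g : α → M := fun k => if k = a then m else if k = b then n else 1
  have hg : ∀ k, k ≠ a → k ≠ b → g k = 1 := fun k ha hb => by simp [g, ha, hb]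
  have := h g
  rw [prod_map_eq_mul_of_sublist h₁ hs₁ hg,
    prod_map_eq_mul_of_sublist h₂ hs₂ fun k hb ha => hg k ha hb] at this
  simpa [g, hab.symm] using this

end Evaluation

namespace InVarietyD

variable {M : Type*} [Monoid M] (hM : InVarietyD M)
include hM

theorem sq_mul_comm (m n : M) : m ^ 2 * n = n * m ^ 2 :=
  (hM.sq_mul_eq_mul_mul m n).trans (hM.mul_mul_eq_mul_sq m n)

theorem pow_eq_sq (m : M) {k : ℕ} (hk : 2 ≤ k) : m ^ k = m ^ 2 := by
  induction k, hk using Nat.le_induction with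
  | base => rfl
  | succ k _ ih => rw [pow_succ, ih, ← pow_succ, hM.pow_three_eq_sq]

theorem pow_min_two (m : M) (k : ℕ) : m ^ min k 2 = m ^ k := by
  rcases le_total k 2 with hk | hk
  · rw [min_eq_left hk]
  · rw [min_eq_right hk, hM.pow_eq_sq m hk]

theorem inVarietySL_of_pow_eq {p q : ℕ} (hpq : min p 2 ≠ min q 2) (h : ∀ m : M, m ^ p = m ^ q) :
    InVarietySL M := by
  have hsq : ∀ m : M, m ^ 2 = m := by
    wlog hlt : min p 2 < min q 2 generalizing p q
    · exact this (Ne.symm hpq) (fun m => (h m).symm) (by omega)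
    intro m
    have hmin : m ^ min p 2 = m ^ min q 2 := by rw [hM.pow_min_two, hM.pow_min_two, h]
    calc m ^ 2 = m ^ (min q 2 + (1 - min p 2)) := (hM.pow_eq_sq m (by omega)).symm
      _ = m ^ (min p 2 + (1 - min p 2)) := by rw [pow_add, ← hmin, ← pow_add]
      _ = m := by rw [show min p 2 + (1 - min p 2) = 1 by omega, pow_one]
  refine ⟨hsq, fun m n => ?_⟩
  calc m * n = m ^ 2 * n := by rw [hsq]
    _ = n * m ^ 2 := hM.sq_mul_comm m n
    _ = n * m := by rw [hsq]

variable {α : Type*} [DecidableEq α] (g : α → M)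

theorem sq_mul_prod_map_filter_ne (a : α) (l : List α) :
    g a ^ 2 * ((l.filter (· ≠ a)).map g).prod = g a ^ 2 * (l.map g).prod := by
  induction l with
  | nil => rfl
  | cons b l ih =>
    by_cases hb : b = a
    · subst hb
      rw [List.filter_cons_of_neg (by simp), ih, List.map_cons, List.prod_cons, ← mul_assoc,
        ← pow_succ, hM.pow_three_eq_sq]
    · rw [List.filter_cons_of_pos (by simpa using hb), List.map_cons, List.prod_cons,
        List.map_cons, List.prod_cons, ← mul_assoc, hM.sq_mul_comm, mul_assoc, ih, ← mul_assoc,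
        ← hM.sq_mul_comm, mul_assoc]

theorem prod_map_eq_sq_mul {l : List α} {a : α} (h : 2 ≤ l.count a) :
    (l.map g).prod = g a ^ 2 * ((l.filter (· ≠ a)).map g).prod := by
  obtain ⟨p, q, r, rfl⟩ := exists_eq_append_cons_append_cons h
  have hfilter : (p ++ a :: (q ++ a :: r)).filter (· ≠ a) = (p ++ (q ++ r)).filter (· ≠ a) := by
    simp [List.filter_append]
  rw [hfilter, hM.sq_mul_prod_map_filter_ne]
  simp only [List.map_append, List.map_cons, List.prod_append, List.prod_cons]
  calc (p.map g).prod * (g a * ((q.map g).prod * (g a * (r.map g).prod)))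
      = (p.map g).prod * (g a * (q.map g).prod * g a) * (r.map g).prod := by
        simp only [mul_assoc]
    _ = g a ^ 2 * ((p.map g).prod * ((q.map g).prod * (r.map g).prod)) := by
        rw [← hM.sq_mul_eq_mul_mul, ← mul_assoc, ← hM.sq_mul_comm]
        simp only [mul_assoc]

theorem prod_map_eq_of_cappedCount_eq {l m : List α} (hc : cappedCount l = cappedCount m)
    (hlin : ((linearPart l).map g).prod = ((linearPart m).map g).prod) :
    (l.map g).prod = (m.map g).prod := by
  induction hn : l.length using Nat.strong_induction_on generalizing l m with
  | _ n ih =>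
  by_cases hrep : ∃ a, 2 ≤ l.count a
  · obtain ⟨a, ha⟩ := hrep
    have ha' : 2 ≤ m.count a := by
      have := min_count_eq_of_cappedCount_eq hc a
      omega
    have hlen : (l.filter (· ≠ a)).length < n :=
      hn ▸ List.length_filter_lt_length_iff_exists.2 ⟨a, List.count_pos_iff.1 (by omega), by simp⟩
    rw [hM.prod_map_eq_sq_mul g ha, hM.prod_map_eq_sq_mul g ha',
      ih _ hlen (cappedCount_filter_ne hc a)
        (by rwa [linearPart_filter_ne ha, linearPart_filter_ne ha']) rfl]
  · push Not at hrep
    have hrep' : ∀ a, m.count a < 2 := fun a => by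
      have := min_count_eq_of_cappedCount_eq hc a
      have := hrep a
      omega
    rwa [linearPart_eq_self hrep, linearPart_eq_self hrep'] at hlin

end InVarietyD

section Normalization

variable {M : Type*} [Monoid M] {α : Type*} [DecidableEq α] (g : α → M)

theorem InVarietyC2.prod_map_eq (hM : InVarietyC2 M) {l m : List α}
    (hc : cappedCount l = cappedCount m) : (l.map g).prod = (m.map g).prod :=
  hM.inVarietyD.prod_map_eq_of_cappedCount_eq g hc <|
    ((perm_linearPart hc).map g).prod_eq' (List.pairwise_of_forall hM.mul_comm)

theorem InVarietySL.prod_map_eq (hM : InVarietySL M) {l m : List α} (h : ∀ a, a ∈ l ↔ a ∈ m) :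
    (l.map g).prod = (m.map g).prod := by
  -- every letter of `l ++ l` occurs at least twice, and the product over it is `(l.map g).prod ^ 2`
  have hc : cappedCount (l ++ l) = cappedCount (m ++ m) := funext fun a => by
    have := h a
    rw [← List.count_pos_iff, ← List.count_pos_iff] at this
    simp only [cappedCount, List.count_append]
    omega
  have := hM.inVarietyC2.prod_map_eq g hc
  rwa [List.map_append, List.prod_append, ← pow_two, hM.sq_eq, List.map_append, List.prod_append,
    ← pow_two, hM.sq_eq] at this

end Normalization

theorem InVarietySL.subsingleton_of_pow_eq {M : Type*} [Monoid M] (hM : InVarietySL M)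
    {p q : ℕ} (hpq : min p 1 ≠ min q 1) (h : ∀ m : M, m ^ p = m ^ q) : Subsingleton M := by
  have hpow : ∀ (m : M) k, m ^ min k 1 = m ^ k := fun m k => by
    rcases Nat.eq_zero_or_pos k with rfl | hk
    · rfl
    · rw [min_eq_right hk, pow_one, ← Nat.sub_add_cancel hk,
        (show IsIdempotentElem m from (pow_two m).symm.trans (hM.sq_eq m)).pow_succ_eq]
  have hone : ∀ m : M, m = 1 := fun m => by
    have hmin : m ^ min p 1 = m ^ min q 1 := by rw [hpow, hpow, h]
    obtain ⟨hp, hq⟩ | ⟨hp, hq⟩ : min p 1 = 0 ∧ min q 1 = 1 ∨ min p 1 = 1 ∧ min q 1 = 0 := by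
      omega
    · simpa [hp, hq] using hmin.symm
    · simpa [hp, hq] using hmin
  exact ⟨fun m n => (hone m).trans (hone n).symm⟩

theorem sigmaD_rel_of {u v : F} (hc : cappedCount u.toList = cappedCount v.toList)
    (hl : linearPart u.toList = linearPart v.toList) : sigmaD.1 u v :=
  (rel_iff_forall_prod_map_eq sigmaD).2 fun g =>
    (sigmaD_le_iff.1 le_rfl).prod_map_eq_of_cappedCount_eq g hc (by rw [hl])

theorem sigmaC2_rel_of {u v : F} (hc : cappedCount u.toList = cappedCount v.toList) :
    sigmaC2.1 u v :=
  (rel_iff_forall_prod_map_eq sigmaC2).2 fun g => (sigmaC2_le_iff.1 le_rfl).prod_map_eq g hc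

theorem sigmaSL_rel_of {u v : F} (h : ∀ a, a ∈ u.toList ↔ a ∈ v.toList) : sigmaSL.1 u v :=
  (rel_iff_forall_prod_map_eq sigmaSL).2 fun g => (sigmaSL_le_iff.1 le_rfl).prod_map_eq g h

theorem pow_count_eq_of_rel {c : FICon} {u v : F} (huv : c.1 u v) (a : ℕ) (m : c.1.Quotient) :
    m ^ u.toList.count a = m ^ v.toList.count a := by
  simpa [prod_map_ite_eq_pow] using
    (rel_iff_forall_prod_map_eq c).1 huv fun k => if k = a then m else 1

theorem sigmaSL_le_of_cappedCount_ne {c : FICon} (hD : sigmaD ≤ c) {u v : F} (huv : c.1 u v)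
    (hne : cappedCount u.toList ≠ cappedCount v.toList) : sigmaSL ≤ c := by
  obtain ⟨a, ha⟩ := Function.ne_iff.1 hne
  exact sigmaSL_le_iff.2 ((sigmaD_le_iff.1 hD).inVarietySL_of_pow_eq ha (pow_count_eq_of_rel huv a))

theorem le_sigmaD_or_sigmaC2_le {c : FICon} (hD : sigmaD ≤ c) : c ≤ sigmaD ∨ sigmaC2 ≤ c := by
  refine or_iff_not_imp_right.2 fun hC2 u v huv => ?_
  have hc : cappedCount u.toList = cappedCount v.toList := by_contra fun hne =>
    hC2 (sigmaC2_le_sigmaSL.trans (sigmaSL_le_of_cappedCount_ne hD huv hne))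
  refine sigmaD_rel_of hc (by_contra fun hne => hC2 (sigmaC2_le_iff.2 ?_))
  exact ⟨(sigmaD_le_iff.1 hD).pow_three_eq_sq,
    mul_comm_of_forall_prod_map_eq (nodup_linearPart _) (nodup_linearPart _) (perm_linearPart hc)
      hne (prod_map_linearPart_eq hc ((rel_iff_forall_prod_map_eq c).1 huv))⟩

theorem le_sigmaC2_or_sigmaSL_le {c : FICon} (hC2 : sigmaC2 ≤ c) : c ≤ sigmaC2 ∨ sigmaSL ≤ c :=
  or_iff_not_imp_right.2 fun hSL _ _ huv => sigmaC2_rel_of <| by_contra fun hne =>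
    hSL (sigmaSL_le_of_cappedCount_ne (sigmaD_le_sigmaC2.trans hC2) huv hne)

theorem le_sigmaSL_or_eq_top {c : FICon} (hSL : sigmaSL ≤ c) : c ≤ sigmaSL ∨ c = ⊤ := by
  refine or_iff_not_imp_right.2 fun htop u v huv => sigmaSL_rel_of fun a => by_contra fun ha => ?_
  rw [← List.count_pos_iff, ← List.count_pos_iff] at ha
  have := (sigmaSL_le_iff.1 hSL).subsingleton_of_pow_eq (by omega) (pow_count_eq_of_rel huv a)
  exact htop (eq_top_of_subsingleton c)

/-- The Rees quotient of the free monoid on `{a, b}` by the ideal of words with a repeated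
letter. -/
inductive ModelD
  | one | a | b | ab | ba | zero
  deriving DecidableEq

instance : Fintype ModelD :=
  ⟨{.one, .a, .b, .ab, .ba, .zero}, fun m => by cases m <;> decide⟩

instance : Monoid ModelD where
  one := .one
  mul
    | .one, m => m
    | m, .one => m
    | .a, .b => .ab
    | .b, .a => .ba
    | _, _ => .zero
  one_mul := by decide
  mul_one := by decide
  mul_assoc := by decide

inductive ModelC2
  | one | a | zero
  deriving DecidableEq

instance : Fintype ModelC2 :=
  ⟨{.one, .a, .zero}, fun m => by cases m <;> decide⟩

instance : Monoid ModelC2 where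
  one := .one
  mul
    | .one, m => m
    | m, .one => m
    | _, _ => .zero
  one_mul := by decide
  mul_one := by decide
  mul_assoc := by decide

theorem sigmaD_lt_sigmaC2 : sigmaD < sigmaC2 := by
  have hD : InVarietyD ModelD := ⟨by decide, by decide, by decide⟩
  refine lt_of_le_not_ge sigmaD_le_sigmaC2 fun h => ?_
  have := sigmaC2_le_identities_iff.1 (h.trans (sigmaD_le_identities_iff.2 hD))
  exact absurd (this.mul_comm .a .b) (by decide)

theorem sigmaC2_lt_sigmaSL : sigmaC2 < sigmaSL := by
  have hC2 : InVarietyC2 ModelC2 := ⟨by decide, by decide⟩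
  refine lt_of_le_not_ge sigmaC2_le_sigmaSL fun h => ?_
  have := sigmaSL_le_identities_iff.1 (h.trans (sigmaC2_le_identities_iff.2 hC2))
  exact absurd (this.sq_eq .a) (by decide)

theorem sigmaSL_lt_top : sigmaSL < ⊤ := by
  have hSL : InVarietySL (ZMod 2) := ⟨by decide, mul_comm⟩
  refine lt_of_le_not_ge le_top fun h => ?_
  exact absurd (h.trans (sigmaSL_le_identities_iff.2 hSL) (top_rel x 1) (evalXY 0 0)) (by decide)

/-- The fully invariant congruences on `F` containing `σ_D` are exactly
`σ_D`, `σ_C2`, `σ_SL` and `⊤`, and these form the strict chain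
`σ_D ⊊ σ_C2 ⊊ σ_SL ⊊ ⊤`.  (Equivalently, the subvariety lattice of the
monoid variety `D` is the four-element chain `T ⊂ SL ⊂ C₂ ⊂ D`.) -/
theorem subvarieties_of_D :
    (∀ c : FICon, sigmaD ≤ c ↔ c = sigmaD ∨ c = sigmaC2 ∨ c = sigmaSL ∨ c = ⊤) ∧
      sigmaD < sigmaC2 ∧ sigmaC2 < sigmaSL ∧ sigmaSL < ⊤ := by
  refine ⟨fun c => ⟨fun hD => ?_, ?_⟩, sigmaD_lt_sigmaC2, sigmaC2_lt_sigmaSL, sigmaSL_lt_top⟩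
  · rcases le_sigmaD_or_sigmaC2_le hD with h | hC2
    · exact .inl (le_antisymm h hD)
    rcases le_sigmaC2_or_sigmaSL_le hC2 with h | hSL
    · exact .inr (.inl (le_antisymm h hC2))
    rcases le_sigmaSL_or_eq_top hSL with h | h
    · exact .inr (.inr (.inl (le_antisymm h hSL)))
    · exact .inr (.inr (.inr h))
  · rintro (rfl | rfl | rfl | rfl)
    · exact le_rfl
    · exact sigmaD_le_sigmaC2
    · exact sigmaD_le_sigmaC2.trans sigmaC2_le_sigmaSL
    · exact le_top
end

section
/- Let W be the set of all words of the form y^{r₁} · x · t^{r₂} · z^{r₃} · x^{c} · y^{r₄} · t^{r₅} · x · z^{r₆} in F, where r₁, r₂, r₃, r₄, r₅, r₆ ≥ 2 and c ∈ {0, 1}. Then W is saturated for σ_K: for every u ∈ W and every word v ∈ F, if σ_K u v then v ∈ W. (In particular, W is a union of σ_K-equivalence classes; the paper states this as: W is a FIC(K)-class.) -/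
/-- The fully invariant congruence corresponding to the variety
`K = var{y²xt²z²y²t²xz² ≈ y²xt²z²xy²t²xz²}`. -/
noncomputable def sigmaK : FICon :=
  fic {(y ^ 2 * x * t ^ 2 * z ^ 2 * y ^ 2 * t ^ 2 * x * z ^ 2,
        y ^ 2 * x * t ^ 2 * z ^ 2 * x * y ^ 2 * t ^ 2 * x * z ^ 2)}

/-- The set `W` of all words `y^{r₁} x t^{r₂} z^{r₃} x^c y^{r₄} t^{r₅} x z^{r₆}`
with `r₁, …, r₆ ≥ 2` and `c ∈ {0, 1}`. -/
def W : Set F :=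
  {w | ∃ r₁ r₂ r₃ r₄ r₅ r₆ c : ℕ,
    2 ≤ r₁ ∧ 2 ≤ r₂ ∧ 2 ≤ r₃ ∧ 2 ≤ r₄ ∧ 2 ≤ r₅ ∧ 2 ≤ r₆ ∧ c ≤ 1 ∧
    w = y ^ r₁ * x * t ^ r₂ * z ^ r₃ * x ^ c * y ^ r₄ * t ^ r₅ * x * z ^ r₆}

/-!
The syntactic congruence of `W` (`u ~ v` iff `a * u * b ∈ W ↔ a * v * b ∈ W` for all `a, b`) has
`W` as a union of classes, so it suffices to show that it contains every instance `(ξ p, ξ q)` of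
the defining identity.

To decide membership in `W`, a word is mapped to its run-length encoding with multiplicities capped
at 2, and every word whose encoding cannot occur in a factor of a word of `W` is sent to a zero.
This map is multiplicative, `W` is the preimage of the codes of its two shapes (`c = 0, 1`), and
these two codes are interchangeable in every context. If `ξ x` has two runs, then `ξ p` and `ξ q`
contain two disjoint copies of a pair of adjacent letters that occurs only once in a word of `W`,
so both are zero. Otherwise `ξ x` has one of nine codes and `ξ y², ξ t², ξ z²` have one of five
codes each, and the identity is checked in these finitely many cases.
-/

def Con.syntactic {M : Type*} [Monoid M] (S : Set M) : Con M where
  r u v := ∀ a b, a * u * b ∈ S ↔ a * v * b ∈ S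
  iseqv := ⟨fun _ _ _ => Iff.rfl, fun h a b => (h a b).symm, fun h h' a b => (h a b).trans (h' a b)⟩
  mul' {u v u' v'} h h' a b := by
    have h₁ := h a (u' * b)
    have h₂ := h' (a * v) b
    simp only [mul_assoc] at h₁ h₂ ⊢
    exact h₁.trans h₂

theorem Con.syntactic.mem_iff {M : Type*} [Monoid M] {S : Set M} {u v : M}
    (h : Con.syntactic S u v) : u ∈ S ↔ v ∈ S := by
  simpa using h 1 1

def Con.fullyInvariantCore (c : Con F) : Con F where
  r u v := ∀ ξ : F →* F, c (ξ u) (ξ v)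
  iseqv := ⟨fun _ _ => c.refl _, fun h ξ => c.symm (h ξ), fun h h' ξ => c.trans (h ξ) (h' ξ)⟩
  mul' h h' ξ := by simpa only [map_mul] using c.mul (h ξ) (h' ξ)

theorem fic_le_of_forall_map {S : Set (F × F)} {c : Con F}
    (h : ∀ ξ : F →* F, ∀ s ∈ S, c (ξ s.1) (ξ s.2)) : (fic S).1 ≤ c := by
  let d : FICon := ⟨c.fullyInvariantCore, fun η _ _ huv ξ => by
    simpa only [MonoidHom.comp_apply] using huv (ξ.comp η)⟩
  have hd : fic S ≤ d := sInf_le fun s hs ξ => h ξ s hs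
  exact fun u v huv => hd huv (MonoidHom.id F)

/-- Run-length encodings `[(a₁, n₁), …]` of words `a₁^{n₁} ⋯`, with multiplicities capped at 2. -/
abbrev Runs (α : Type*) := List (α × ℕ)

namespace Runs

variable {α : Type*}

def letters (R : Runs α) : List α := R.map Prod.fst

@[simp] theorem letters_nil : letters ([] : Runs α) = [] := rfl

@[simp] theorem letters_cons (p : α × ℕ) (R : Runs α) : letters (p :: R) = p.1 :: letters R := rfl

def Reduced (R : Runs α) : Prop := R.letters.IsChain (· ≠ ·)

variable [DecidableEq α]

def push (a : α) (n : ℕ) : Runs α → Runs α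
  | [] => [(a, n)]
  | (b, m) :: R => if a = b then (b, min (n + m) 2) :: R else (a, n) :: (b, m) :: R

def append (S T : Runs α) : Runs α := S.foldr (fun p R => push p.1 p.2 R) T

@[simp] theorem nil_append (T : Runs α) : append [] T = T := rfl

theorem cons_append (p : α × ℕ) (S T : Runs α) :
    append (p :: S) T = push p.1 p.2 (append S T) := rfl

theorem push_push (a : α) (n m : ℕ) (R : Runs α) :
    push a n (push a m R) = push a (min (n + m) 2) R := by
  rcases R with _ | ⟨⟨b, k⟩, R⟩
  · simp [push]
  · by_cases h : a = b
    · subst h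
      simp only [push, if_true, Prod.mk.injEq, List.cons.injEq, true_and, and_true]
      omega
    · simp [push, h]

theorem push_append (a : α) (n : ℕ) (S T : Runs α) :
    append (push a n S) T = push a n (append S T) := by
  rcases S with _ | ⟨⟨b, m⟩, S⟩
  · rfl
  · by_cases h : a = b
    · subst h
      rw [show push a n ((a, m) :: S) = (a, min (n + m) 2) :: S by simp [push]]
      simp only [cons_append, push_push]
    · simp [push, h, cons_append]

theorem exists_push_eq_cons (a : α) (n : ℕ) (R : Runs α) :
    ∃ k R', push a n R = (a, k) :: R' := by
  rcases R with _ | ⟨⟨b, m⟩, R⟩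
  · exact ⟨n, [], rfl⟩
  · by_cases h : a = b
    · subst h; exact ⟨min (n + m) 2, R, by simp [push]⟩
    · exact ⟨n, (b, m) :: R, by simp [push, h]⟩

theorem Reduced.push {R : Runs α} (h : R.Reduced) (a : α) (n : ℕ) : (R.push a n).Reduced := by
  rcases R with _ | ⟨⟨b, m⟩, R⟩
  · simp [Reduced, Runs.push, letters]
  · by_cases hab : a = b
    · subst hab; simpa [Reduced, Runs.push, letters] using h
    · simp only [Reduced, Runs.push, if_neg hab, letters, List.map_cons] at h ⊢
      exact h.cons_cons hab

theorem letters_append {S : Runs α} (hS : S.Reduced) (T : Runs α) :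
    letters (append S T) = letters S ++ letters T ∨
      ∃ s b l, letters S = s ++ [b] ∧ letters T = b :: l ∧
        letters (append S T) = letters S ++ l := by
  induction S with
  | nil => simp [letters]
  | cons p S ih =>
    rcases S with _ | ⟨q, S⟩
    · rcases T with _ | ⟨⟨b, m⟩, T⟩
      · simp [push, letters, cons_append]
      · by_cases h : p.1 = b
        · exact Or.inr ⟨[], b, letters T, by simp [h], rfl, by simp [cons_append, push, h]⟩
        · exact Or.inl (by simp [cons_append, push, h])
    · simp only [Reduced, letters_cons, List.isChain_cons_cons] at hS
      obtain ⟨k, R, hR⟩ := exists_push_eq_cons q.1 q.2 (append S T)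
      have hq : append (q :: S) T = (q.1, k) :: R := hR
      have hcons : append (p :: q :: S) T = p :: append (q :: S) T := by
        rw [cons_append, hq]; simp [push, hS.1]
      rw [hcons, letters_cons, letters_cons]
      rcases ih hS.2 with h | ⟨s, b, l, e₁, e₂, e₃⟩
      · exact Or.inl (by rw [h]; rfl)
      · exact Or.inr ⟨p.1 :: s, b, l, by rw [e₁]; rfl, e₂, by rw [e₃]; rfl⟩

theorem letters_infix_append_left {S : Runs α} (hS : S.Reduced) (T : Runs α) :
    letters S <:+: letters (append S T) := by
  rcases letters_append hS T with h | ⟨s, b, l, -, -, h⟩ <;> rw [h] <;>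
    exact (List.prefix_append _ _).isInfix

theorem letters_infix_append_right {S : Runs α} (hS : S.Reduced) (T : Runs α) :
    letters T <:+: letters (append S T) := by
  rcases letters_append hS T with h | ⟨s, b, l, e₁, e₂, h⟩
  · rw [h]; exact (List.suffix_append _ _).isInfix
  · rw [h, e₁, e₂, List.append_assoc, List.singleton_append]
    exact (List.suffix_append _ _).isInfix

theorem mem_push_of_mem {a b : α} {n : ℕ} {R : Runs α} (h : (b, 2) ∈ R) : (b, 2) ∈ push a n R := by
  rcases R with _ | ⟨⟨c, m⟩, R⟩
  · simp at h
  · by_cases hac : a = c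
    · subst hac
      rcases List.mem_cons.1 h with h | h
      · simp only [Prod.mk.injEq] at h
        obtain ⟨rfl, rfl⟩ := h
        simp [push]
      · simp [push, h]
    · simp [push, hac, h]

theorem mem_push_self (a : α) (R : Runs α) : (a, 2) ∈ push a 2 R := by
  rcases R with _ | ⟨⟨c, m⟩, R⟩
  · simp [push]
  · by_cases hac : a = c
    · subst hac; simp [push]
    · simp [push, hac]

theorem mem_append_left {b : α} {S : Runs α} (T : Runs α) (h : (b, 2) ∈ S) :
    (b, 2) ∈ append S T := by
  induction S with
  | nil => simp at h
  | cons p S ih =>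
    rw [cons_append]
    rcases List.mem_cons.1 h with rfl | h
    · exact mem_push_self b _
    · exact mem_push_of_mem (ih h)

theorem mem_append_right {b : α} (S : Runs α) {T : Runs α} (h : (b, 2) ∈ T) :
    (b, 2) ∈ append S T := by
  induction S with
  | nil => exact h
  | cons p S ih => exact mem_push_of_mem ih

end Runs

open Runs

def runs {α : Type*} [DecidableEq α] : List α → Runs α
  | [] => []
  | a :: w => push a 1 (runs w)

section runs

variable {α : Type*} [DecidableEq α]

@[simp] theorem runs_nil : runs ([] : List α) = [] := rfl

@[simp] theorem runs_cons (a : α) (w : List α) : runs (a :: w) = push a 1 (runs w) := rfl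

theorem runs_append (u v : List α) : runs (u ++ v) = append (runs u) (runs v) := by
  induction u with
  | nil => rfl
  | cons a u ih => simp [ih, push_append]

theorem reduced_runs (w : List α) : (runs w).Reduced := by
  induction w with
  | nil => simp [Reduced, letters]
  | cons a w ih => exact ih.push a 1

theorem runs_eq_nil {w : List α} : runs w = [] ↔ w = [] := by
  refine ⟨fun h => ?_, fun h => h ▸ rfl⟩
  rcases w with _ | ⟨a, w⟩
  · rfl
  · obtain ⟨k, R, hR⟩ := exists_push_eq_cons a 1 (runs w)
    simp [hR] at h

theorem runs_replicate (a : α) {n : ℕ} (hn : 1 ≤ n) :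
    runs (List.replicate n a) = [(a, min n 2)] := by
  induction n with
  | zero => omega
  | succ n ih =>
    rcases Nat.eq_zero_or_pos n with rfl | hn'
    · rfl
    · simp only [List.replicate_succ, runs_cons, ih hn', push, if_true]
      congr 2
      omega

theorem exists_of_runs_eq_cons {w : List α} {a : α} {k : ℕ} {R : Runs α}
    (h : runs w = (a, k) :: R) :
    ∃ n w', 1 ≤ n ∧ min n 2 = k ∧ w = List.replicate n a ++ w' ∧ runs w' = R := by
  induction w generalizing k R with
  | nil => simp at h
  | cons b w ih =>
    rcases hw : runs w with _ | ⟨⟨c, m⟩, R'⟩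
    · simp only [runs_cons, hw, push, List.cons.injEq, Prod.mk.injEq] at h
      obtain ⟨⟨rfl, rfl⟩, rfl⟩ := h
      exact ⟨1, w, le_rfl, rfl, rfl, hw⟩
    · by_cases hbc : b = c
      · subst hbc
        simp only [runs_cons, hw, push, if_true, List.cons.injEq, Prod.mk.injEq] at h
        obtain ⟨⟨rfl, rfl⟩, rfl⟩ := h
        obtain ⟨n, w', hn, hm, rfl, hw'⟩ := ih hw
        exact ⟨n + 1, w', by omega, by omega, rfl, hw'⟩
      · simp only [runs_cons, hw, push, if_neg hbc, List.cons.injEq, Prod.mk.injEq] at h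
        obtain ⟨⟨rfl, rfl⟩, rfl⟩ := h
        exact ⟨1, w, le_rfl, rfl, rfl, hw⟩

end runs

/-- The letter sequences of the words of `W` with `c = 0` and `c = 1`; here `x, y, z, t` are
the letters `0, 1, 2, 3`. -/
def shape₀ : List ℕ := [1, 0, 3, 2, 1, 3, 0, 2]
def shape₁ : List ℕ := [1, 0, 3, 2, 0, 1, 3, 0, 2]

def codeW₀ : Runs ℕ := [(1, 2), (0, 1), (3, 2), (2, 2), (1, 2), (3, 2), (0, 1), (2, 2)]
def codeW₁ : Runs ℕ := [(1, 2), (0, 1), (3, 2), (2, 2), (0, 1), (1, 2), (3, 2), (0, 1), (2, 2)]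

/-- An over-approximation of the encodings of factors of words of `W` which is closed under
taking factors, so that the remaining words form an ideal. -/
def Admissible (R : Runs ℕ) : Prop :=
  (0, 2) ∉ R ∧ (letters R <:+: shape₀ ∨ letters R <:+: shape₁)

instance : DecidablePred Admissible := fun R => by unfold Admissible; infer_instance

theorem Admissible.of_append {S T : Runs ℕ} (hS : S.Reduced) (h : Admissible (append S T)) :
    Admissible S ∧ Admissible T := by
  obtain ⟨hx, hsh⟩ := h
  have hl := letters_infix_append_left hS T
  have hr := letters_infix_append_right hS T
  refine ⟨⟨fun h => hx (mem_append_left T h), ?_⟩, ⟨fun h => hx (mem_append_right S h), ?_⟩⟩ <;>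
    rcases hsh with h | h
  exacts [Or.inl (hl.trans h), Or.inr (hl.trans h), Or.inl (hr.trans h), Or.inr (hr.trans h)]

/-- `none` stands for the zero of the quotient monoid. -/
def ofRuns (R : Runs ℕ) : Option (Runs ℕ) := if Admissible R then some R else none

def code (w : F) : Option (Runs ℕ) := ofRuns (runs w.toList)

def mulCode : Option (Runs ℕ) → Option (Runs ℕ) → Option (Runs ℕ)
  | some S, some T => ofRuns (append S T)
  | _, _ => none

theorem code_mul (u v : F) : code (u * v) = mulCode (code u) (code v) := by
  have hdead {R : Runs ℕ} (h : ¬ Admissible R) : ofRuns R = none := if_neg h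
  simp only [code, FreeMonoid.toList_mul, runs_append]
  by_cases hu : Admissible (runs u.toList)
  · by_cases hv : Admissible (runs v.toList)
    · simp [ofRuns, hu, hv, mulCode]
    · rw [hdead fun h => hv (h.of_append (reduced_runs _)).2, hdead hv]
      cases ofRuns (runs u.toList) <;> rfl
  · rw [hdead fun h => hu (h.of_append (reduced_runs _)).1, hdead hu]
    rfl

theorem toList_of_pow (a n : ℕ) : (FreeMonoid.of a ^ n : F).toList = List.replicate n a := by
  induction n with
  | zero => rfl
  | succ n ih =>
    rw [pow_succ, FreeMonoid.toList_mul, ih, FreeMonoid.toList_of, List.replicate_succ']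

theorem code_of_pow {a r : ℕ} (hr : 2 ≤ r) : code (FreeMonoid.of a ^ r) = ofRuns [(a, 2)] := by
  rw [code, toList_of_pow, runs_replicate a (by omega), min_eq_right hr]

theorem code_of_mem_W {w : F} (hw : w ∈ W) : code w = some codeW₀ ∨ code w = some codeW₁ := by
  obtain ⟨r₁, r₂, r₃, r₄, r₅, r₆, c, h₁, h₂, h₃, h₄, h₅, h₆, hc, rfl⟩ := hw
  simp only [code_mul, x, y, z, t, code_of_pow h₁, code_of_pow h₂, code_of_pow h₃, code_of_pow h₄,
    code_of_pow h₅, code_of_pow h₆]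
  interval_cases c <;> decide

theorem exists_of_runs_toList_eq_cons {w : F} {a k : ℕ} {R : Runs ℕ}
    (h : runs w.toList = (a, k) :: R) :
    ∃ n w', 1 ≤ n ∧ min n 2 = k ∧ w = FreeMonoid.of a ^ n * w' ∧ runs w'.toList = R := by
  obtain ⟨n, w', hn, hk, hw, hR⟩ := exists_of_runs_eq_cons h
  refine ⟨n, FreeMonoid.ofList w', hn, hk, FreeMonoid.toList.injective ?_, hR⟩
  rw [FreeMonoid.toList_mul, toList_of_pow, hw]
  rfl

theorem eq_one_of_runs_eq_nil {w : F} (h : runs w.toList = []) : w = 1 :=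
  FreeMonoid.toList.injective (runs_eq_nil.1 h)

theorem runs_eq_of_code_eq_some {w : F} {R : Runs ℕ} (h : code w = some R) : runs w.toList = R := by
  unfold code ofRuns at h
  split at h <;> simp_all

theorem mem_W_of_runs_eq_codeW₀ {w : F} (h : runs w.toList = codeW₀) : w ∈ W := by
  obtain ⟨n₁, w₁, -, hk₁, rfl, h₁⟩ := exists_of_runs_toList_eq_cons h
  obtain ⟨n₂, w₂, -, hk₂, rfl, h₂⟩ := exists_of_runs_toList_eq_cons h₁
  obtain ⟨n₃, w₃, -, hk₃, rfl, h₃⟩ := exists_of_runs_toList_eq_cons h₂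
  obtain ⟨n₄, w₄, -, hk₄, rfl, h₄⟩ := exists_of_runs_toList_eq_cons h₃
  obtain ⟨n₅, w₅, -, hk₅, rfl, h₅⟩ := exists_of_runs_toList_eq_cons h₄
  obtain ⟨n₆, w₆, -, hk₆, rfl, h₆⟩ := exists_of_runs_toList_eq_cons h₅
  obtain ⟨n₇, w₇, -, hk₇, rfl, h₇⟩ := exists_of_runs_toList_eq_cons h₆
  obtain ⟨n₈, w₈, -, hk₈, rfl, h₈⟩ := exists_of_runs_toList_eq_cons h₇
  obtain rfl : w₈ = 1 := eq_one_of_runs_eq_nil h₈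
  obtain rfl : n₂ = 1 := by omega
  obtain rfl : n₇ = 1 := by omega
  exact ⟨n₁, n₃, n₄, n₅, n₆, n₈, 0, by omega, by omega, by omega, by omega, by omega, by omega,
    by omega, by simp [x, y, z, t, mul_assoc]⟩

theorem mem_W_of_runs_eq_codeW₁ {w : F} (h : runs w.toList = codeW₁) : w ∈ W := by
  obtain ⟨n₁, w₁, -, hk₁, rfl, h₁⟩ := exists_of_runs_toList_eq_cons h
  obtain ⟨n₂, w₂, -, hk₂, rfl, h₂⟩ := exists_of_runs_toList_eq_cons h₁
  obtain ⟨n₃, w₃, -, hk₃, rfl, h₃⟩ := exists_of_runs_toList_eq_cons h₂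
  obtain ⟨n₄, w₄, -, hk₄, rfl, h₄⟩ := exists_of_runs_toList_eq_cons h₃
  obtain ⟨n₅, w₅, -, hk₅, rfl, h₅⟩ := exists_of_runs_toList_eq_cons h₄
  obtain ⟨n₆, w₆, -, hk₆, rfl, h₆⟩ := exists_of_runs_toList_eq_cons h₅
  obtain ⟨n₇, w₇, -, hk₇, rfl, h₇⟩ := exists_of_runs_toList_eq_cons h₆
  obtain ⟨n₈, w₈, -, hk₈, rfl, h₈⟩ := exists_of_runs_toList_eq_cons h₇
  obtain ⟨n₉, w₉, -, hk₉, rfl, h₉⟩ := exists_of_runs_toList_eq_cons h₈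
  obtain rfl : w₉ = 1 := eq_one_of_runs_eq_nil h₉
  obtain rfl : n₂ = 1 := by omega
  obtain rfl : n₅ = 1 := by omega
  obtain rfl : n₈ = 1 := by omega
  exact ⟨n₁, n₃, n₄, n₆, n₇, n₉, 1, by omega, by omega, by omega, by omega, by omega, by omega,
    le_rfl, by simp [x, y, z, t, mul_assoc]⟩

def IsWCode (o : Option (Runs ℕ)) : Prop := o = some codeW₀ ∨ o = some codeW₁

theorem mem_W_iff_isWCode (w : F) : w ∈ W ↔ IsWCode (code w) := by
  refine ⟨code_of_mem_W, ?_⟩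
  rintro (h | h)
  exacts [mem_W_of_runs_eq_codeW₀ (runs_eq_of_code_eq_some h),
    mem_W_of_runs_eq_codeW₁ (runs_eq_of_code_eq_some h)]

/-- Some pair of adjacent letters occurs twice in `L`. -/
def RepeatsPair (L : List ℕ) : Prop := ∃ e b c f, L = e ++ b :: c :: f ∧ [b, c] <:+: c :: f

theorem RepeatsPair.of_infix {L L' : List ℕ} (h : RepeatsPair L) (hL : L <:+: L') :
    RepeatsPair L' := by
  obtain ⟨e, b, c, f, rfl, hbc⟩ := h
  obtain ⟨u, v, rfl⟩ := hL
  exact ⟨u ++ e, b, c, f ++ v, by simp, hbc.trans ((c :: f).prefix_append v).isInfix⟩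

theorem not_repeatsPair_of_shape {L : List ℕ} (hL : L = shape₀ ∨ L = shape₁) : ¬ RepeatsPair L := by
  have key : ∀ L ∈ [shape₀, shape₁], ∀ k < L.length,
      ¬ (L.drop k).take 2 <:+: L.drop (k + 1) := by decide
  rintro ⟨e, b, c, f, rfl, hbc⟩
  have hmem : e ++ b :: c :: f ∈ [shape₀, shape₁] := by
    rcases hL with h | h <;> simp [h]
  have hlt : e.length < (e ++ b :: c :: f).length := by simp
  refine key _ hmem e.length hlt ?_
  have h₁ : (e ++ b :: c :: f).drop (e.length + 1) = c :: f := by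
    simp [List.drop_append]
  rw [List.drop_left, h₁]
  exact hbc

theorem Admissible.not_repeatsPair {R : Runs ℕ} (h : Admissible R) : ¬ RepeatsPair (letters R) :=
  fun hR => h.2.elim (fun h => not_repeatsPair_of_shape (.inl rfl) (hR.of_infix h))
    (fun h => not_repeatsPair_of_shape (.inr rfl) (hR.of_infix h))

theorem repeatsPair_append {S T : Runs ℕ} {b c : ℕ} {s : List ℕ} (hS : S.Reduced)
    (hb : letters S = b :: c :: s) (hT : [b, c] <:+: letters T) :
    RepeatsPair (letters (append S T)) := by
  rcases letters_append hS T with h | ⟨s', d, l, e₁, e₂, h⟩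
  · exact ⟨[], b, c, s ++ letters T, by simp [h, hb],
      hT.trans (List.infix_cons (List.suffix_append s _).isInfix)⟩
  · refine ⟨[], b, c, s ++ l, by simp [h, hb], hT.trans ?_⟩
    obtain ⟨b', s'', rfl⟩ := List.exists_cons_of_ne_nil (by rintro rfl; simp_all : s' ≠ [])
    have hcs : c :: s = s'' ++ [d] := by simp_all
    rw [e₂, ← List.cons_append, hcs, List.append_assoc, List.singleton_append]
    exact (List.suffix_append _ _).isInfix

/-- A factor with at least two runs cannot occur twice in a factor of a word of `W`. -/
theorem code_eq_none_of_two_le_length {X : F} (hX : 2 ≤ (runs X.toList).length) (l m r : F) :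
    code (l * X * m * X * r) = none := by
  obtain ⟨p, q, R, hpq⟩ : ∃ p q R, runs X.toList = p :: q :: R := by
    rcases h : runs X.toList with _ | ⟨p, _ | ⟨q, R⟩⟩ <;> simp_all
  have hXr : [p.1, q.1] <:+: letters (runs (X.toList ++ r.toList)) := by
    rw [runs_append]
    refine List.IsInfix.trans ?_ (letters_infix_append_left (reduced_runs _) _)
    exact ⟨[], letters R, by simp [hpq]⟩
  have hrep : RepeatsPair (letters (runs (X.toList ++ (m.toList ++ (X.toList ++ r.toList))))) := by
    rw [runs_append]
    refine repeatsPair_append (b := p.1) (c := q.1) (s := letters R) (reduced_runs _)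
      (by simp [hpq]) ?_
    rw [runs_append]
    exact hXr.trans (letters_infix_append_right (reduced_runs _) _)
  have hrep' : RepeatsPair (letters (runs (l * X * m * X * r).toList)) := by
    simp only [FreeMonoid.toList_mul, List.append_assoc]
    rw [runs_append]
    exact hrep.of_infix (letters_infix_append_right (reduced_runs _) _)
  exact if_neg fun h => h.not_repeatsPair hrep'

def atomCodes : List (Option (Runs ℕ)) :=
  [none, some [], some [(0, 1)], some [(1, 1)], some [(1, 2)], some [(2, 1)], some [(2, 2)],
    some [(3, 1)], some [(3, 2)]]

def squareCodes : List (Option (Runs ℕ)) :=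
  [none, some [], some [(1, 2)], some [(2, 2)], some [(3, 2)]]

theorem Admissible.le_three_of_single {a k : ℕ} (h : Admissible [(a, k)]) : a ≤ 3 := by
  have : a ∈ shape₀ ∨ a ∈ shape₁ := h.2.imp (·.subset (by simp)) (·.subset (by simp))
  simp [shape₀, shape₁] at this
  omega

theorem code_one : code 1 = some [] := by decide

theorem code_mem_atomCodes {X : F} (hX : (runs X.toList).length ≤ 1) : code X ∈ atomCodes := by
  rcases h : runs X.toList with _ | ⟨⟨a, k⟩, _ | _⟩
  · rw [eq_one_of_runs_eq_nil h, code_one]; decide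
  · obtain ⟨n, -, hn, rfl, -⟩ := exists_of_runs_eq_cons h
    rw [code, h]
    by_cases had : Admissible [(a, min n 2)]
    · have ha := had.le_three_of_single
      obtain hk | hk : min n 2 = 1 ∨ min n 2 = 2 := by omega
      all_goals rw [hk]; interval_cases a <;> decide
    · simp [ofRuns, had, atomCodes]
  · simp [h] at hX

theorem code_sq_mem_squareCodes (X : F) : code (X ^ 2) ∈ squareCodes := by
  by_cases hX : 2 ≤ (runs X.toList).length
  · have := code_eq_none_of_two_le_length hX 1 1 1
    simp only [mul_one, one_mul] at this
    simp [pow_two, this, squareCodes]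
  rcases h : runs X.toList with _ | ⟨⟨a, k⟩, _ | _⟩
  · rw [eq_one_of_runs_eq_nil h, one_pow, code_one]; decide
  · obtain ⟨n, w, hn, -, rfl, hw⟩ := exists_of_runs_toList_eq_cons h
    obtain rfl := eq_one_of_runs_eq_nil hw
    rw [mul_one, ← pow_mul, code_of_pow (by omega)]
    by_cases had : Admissible [(a, 2)]
    · have ha := had.le_three_of_single
      interval_cases a <;> decide
    · simp [ofRuns, had, squareCodes]
  · simp [h] at hX

theorem eq_nil_of_infix_shape {s L M : List ℕ} (hL : L = shape₀ ∨ L = shape₁)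
    (hM : M = s ++ L ∨ M = L ++ s) (h : M <:+: shape₀ ∨ M <:+: shape₁) : s = [] := by
  rcases s with _ | ⟨d, s⟩
  · rfl
  exfalso
  rcases hL with rfl | rfl <;> rcases hM with rfl | rfl <;> rcases h with h | h <;>
    have hl := h.length_le <;>
    simp only [shape₀, shape₁, List.length_append, List.length_cons] at hl
  any_goals omega
  all_goals
    obtain rfl : s = [] := List.eq_nil_of_length_eq_zero (by omega)
    simpa [shape₀, shape₁] using h.eq_of_length rfl

theorem letters_eq_of_admissible_append_shape {S T : Runs ℕ} (hS : S.Reduced)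
    (hT : letters T = shape₀ ∨ letters T = shape₁) (h : Admissible (append S T)) :
    letters S = [] ∨ letters S = [1] := by
  rcases letters_append hS T with e | ⟨s, b, l, e₁, e₂, e₃⟩
  · exact .inl (eq_nil_of_infix_shape hT (.inl e) h.2)
  · obtain rfl : b = 1 := by
      rcases hT with h | h <;> rw [h] at e₂ <;> simp [shape₀, shape₁] at e₂ <;> omega
    have hs : s = [] := eq_nil_of_infix_shape hT (.inl (by rw [e₃, e₁, e₂]; simp)) h.2
    exact .inr (by rw [e₁, hs]; rfl)

theorem letters_eq_of_admissible_shape_append {T S : Runs ℕ} (hT : T.Reduced)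
    (hTl : letters T = shape₀ ∨ letters T = shape₁) (h : Admissible (append T S)) :
    letters S = [] ∨ letters S = [2] := by
  rcases letters_append hT S with e | ⟨s, b, l, e₁, e₂, e₃⟩
  · exact .inl (eq_nil_of_infix_shape hTl (.inr e) h.2)
  · obtain rfl : b = 2 := by
      have := congrArg List.getLast? e₁
      rcases hTl with h | h <;> rw [h] at this <;> simp [shape₀, shape₁] at this <;> omega
    have hl : l = [] := eq_nil_of_infix_shape hTl (.inr e₃) h.2
    exact .inr (by rw [e₂, hl])

def CodeEquiv (o o' : Option (Runs ℕ)) : Prop := o = o' ∨ IsWCode o ∧ IsWCode o'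

theorem CodeEquiv.symm {o o' : Option (Runs ℕ)} (h : CodeEquiv o o') : CodeEquiv o' o :=
  h.imp Eq.symm And.symm

theorem CodeEquiv.isWCode_iff {o o' : Option (Runs ℕ)} (h : CodeEquiv o o') :
    IsWCode o ↔ IsWCode o' := by
  rcases h with rfl | ⟨h, h'⟩
  exacts [Iff.rfl, iff_of_true h h']

theorem codeEquiv_ofRuns_codeW : CodeEquiv (ofRuns codeW₀) (ofRuns codeW₁) :=
  .inr ⟨.inl (by decide), .inr (by decide)⟩

theorem codeEquiv_mulCode_codeW_left (a : F) :
    CodeEquiv (mulCode (code a) (some codeW₀)) (mulCode (code a) (some codeW₁)) := by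
  rcases hc : code a with _ | S
  · exact .inl rfl
  simp only [mulCode]
  have hS : S.Reduced := runs_eq_of_code_eq_some hc ▸ reduced_runs _
  by_cases h : Admissible (append S codeW₀) ∨ Admissible (append S codeW₁)
  · rcases h.elim (letters_eq_of_admissible_append_shape hS (.inl rfl))
      (letters_eq_of_admissible_append_shape hS (.inr rfl)) with hl | hl
    · rw [List.map_eq_nil_iff.1 hl]
      exact codeEquiv_ofRuns_codeW
    · obtain ⟨⟨_, k⟩, rfl, rfl⟩ := List.map_eq_singleton_iff.1 hl
      rw [show append [(1, k)] codeW₀ = codeW₀ by simp [codeW₀, append, push],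
        show append [(1, k)] codeW₁ = codeW₁ by simp [codeW₁, append, push]]
      exact codeEquiv_ofRuns_codeW
  · push Not at h
    exact .inl (by simp only [ofRuns, if_neg h.1, if_neg h.2])

theorem codeEquiv_mulCode_codeW_right (b : F) :
    CodeEquiv (mulCode (some codeW₀) (code b)) (mulCode (some codeW₁) (code b)) := by
  rcases hc : code b with _ | S
  · exact .inl rfl
  simp only [mulCode]
  by_cases h : Admissible (append codeW₀ S) ∨ Admissible (append codeW₁ S)
  · rcases h.elim (letters_eq_of_admissible_shape_append (by unfold Reduced; decide) (.inl rfl))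
      (letters_eq_of_admissible_shape_append (by unfold Reduced; decide) (.inr rfl)) with hl | hl
    · rw [List.map_eq_nil_iff.1 hl]
      exact codeEquiv_ofRuns_codeW
    · obtain ⟨⟨_, k⟩, rfl, rfl⟩ := List.map_eq_singleton_iff.1 hl
      rw [show append codeW₀ [(2, k)] = codeW₀ by simp [codeW₀, append, push],
        show append codeW₁ [(2, k)] = codeW₁ by simp [codeW₁, append, push]]
      exact codeEquiv_ofRuns_codeW
  · push Not at h
    exact .inl (by simp only [ofRuns, if_neg h.1, if_neg h.2])

theorem CodeEquiv.mulCode_left (a : F) {o o' : Option (Runs ℕ)} (h : CodeEquiv o o') :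
    CodeEquiv (mulCode (code a) o) (mulCode (code a) o') := by
  rcases h with rfl | ⟨rfl | rfl, rfl | rfl⟩
  exacts [.inl rfl, .inl rfl, codeEquiv_mulCode_codeW_left a,
    (codeEquiv_mulCode_codeW_left a).symm, .inl rfl]

theorem CodeEquiv.mulCode_right (b : F) {o o' : Option (Runs ℕ)} (h : CodeEquiv o o') :
    CodeEquiv (mulCode o (code b)) (mulCode o' (code b)) := by
  rcases h with rfl | ⟨rfl | rfl, rfl | rfl⟩
  exacts [.inl rfl, .inl rfl, codeEquiv_mulCode_codeW_right b,
    (codeEquiv_mulCode_codeW_right b).symm, .inl rfl]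

theorem syntactic_W_of_codeEquiv {u v : F} (h : CodeEquiv (code u) (code v)) :
    Con.syntactic W u v := fun a b => by
  simp only [mem_W_iff_isWCode, code_mul]
  exact ((h.mulCode_left a).mulCode_right b).isWCode_iff

instance : DecidableRel CodeEquiv := fun _ _ => by unfold CodeEquiv IsWCode; infer_instance

local infixl:70 " ⋆ " => mulCode

-- `p` and `q` evaluated at a code of `x` and codes of the squares `y², t², z²`
theorem codeEquiv_eval_p_q : ∀ A ∈ atomCodes, ∀ B ∈ squareCodes, ∀ T ∈ squareCodes,
    ∀ Z ∈ squareCodes,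
    CodeEquiv (B ⋆ A ⋆ T ⋆ Z ⋆ B ⋆ T ⋆ A ⋆ Z) (B ⋆ A ⋆ T ⋆ Z ⋆ A ⋆ B ⋆ T ⋆ A ⋆ Z) := by
  decide

theorem codeEquiv_map (ξ : F →* F) :
    CodeEquiv (code (ξ (y ^ 2 * x * t ^ 2 * z ^ 2 * y ^ 2 * t ^ 2 * x * z ^ 2)))
      (code (ξ (y ^ 2 * x * t ^ 2 * z ^ 2 * x * y ^ 2 * t ^ 2 * x * z ^ 2))) := by
  by_cases hx : 2 ≤ (runs (ξ x).toList).length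
  · have hp : ξ (y ^ 2 * x * t ^ 2 * z ^ 2 * y ^ 2 * t ^ 2 * x * z ^ 2) =
        ξ y ^ 2 * ξ x * (ξ t ^ 2 * ξ z ^ 2 * ξ y ^ 2 * ξ t ^ 2) * ξ x * ξ z ^ 2 := by
      simp only [map_mul, map_pow, mul_assoc]
    have hq : ξ (y ^ 2 * x * t ^ 2 * z ^ 2 * x * y ^ 2 * t ^ 2 * x * z ^ 2) =
        ξ y ^ 2 * ξ x * (ξ t ^ 2 * ξ z ^ 2) * ξ x * (ξ y ^ 2 * ξ t ^ 2 * ξ x * ξ z ^ 2) := by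
      simp only [map_mul, map_pow, mul_assoc]
    rw [hp, hq, code_eq_none_of_two_le_length hx, code_eq_none_of_two_le_length hx]
    exact .inl rfl
  · simp only [map_mul, map_pow, code_mul]
    exact codeEquiv_eval_p_q _ (code_mem_atomCodes (by omega)) _ (code_sq_mem_squareCodes _) _
      (code_sq_mem_squareCodes _) _ (code_sq_mem_squareCodes _)

/-- The set `W` is saturated for `σ_K`: it is a union of `σ_K`-classes. -/
theorem W_saturated (u v : F) (hu : u ∈ W) (huv : sigmaK.1 u v) : v ∈ W := by
  have hle : sigmaK.1 ≤ Con.syntactic W := fic_le_of_forall_map fun ξ s hs => by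
    rw [Set.mem_singleton_iff.1 hs]
    exact syntactic_W_of_codeEquiv (codeEquiv_map ξ)
  exact (Con.syntactic.mem_iff (hle huv)).1 hu
end

section
/- For all words u, v ∈ F: σ_LRB u v if and only if ini(u) = ini(v), where ini(w) is the initial part of w (the word obtained from w by retaining only the first occurrence of each letter, in order). (Equivalently: an identity u ≈ v holds in the variety LRB = var{xy ≈ xyx} of left regular band monoids if and only if ini(u) = ini(v).) -/
/-- The fully invariant congruence corresponding to the variety
`LRB = var{xy ≈ xyx}` of left regular band monoids. -/
noncomputable def sigmaLRB : FICon := fic {(x * y, x * y * x)}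

/-- The initial part of a word: the subword consisting of the first occurrence
of each letter, occurrences kept in their original order. -/
def ini (w : F) : F :=
  FreeMonoid.ofList
    ((FreeMonoid.toList w).foldl (fun acc a => if a ∈ acc then acc else acc ++ [a]) [])

/-!
Words with the same initial part are `σ_LRB`-equivalent: in a left regular band a letter that
already occurred can be deleted, since `s a t a = s (a t a) ≈ s (a t) = s a t`, and deleting all
later occurrences of every letter turns a word into its initial part. Conversely, the kernel of
`ini` is a congruence (`ini (u v)` is computed from `ini u` and `ini v`) that contains every
substitution instance `a b ≈ a b a` of the defining identity; the congruence generated by these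
instances is fully invariant, so it contains `σ_LRB`.
-/

open FreeMonoid

section AppendIfNotMem

variable {α : Type*} [DecidableEq α]

def appendIfNotMem (acc : List α) (a : α) : List α :=
  if a ∈ acc then acc else acc ++ [a]

theorem mem_foldl_appendIfNotMem {a : α} :
    ∀ {l acc : List α}, a ∈ l.foldl appendIfNotMem acc ↔ a ∈ acc ∨ a ∈ l
  | [], _ => by simp
  | b :: l, acc => by
    rw [List.foldl_cons, mem_foldl_appendIfNotMem, appendIfNotMem]
    split_ifs with hb <;> simp only [List.mem_append, List.mem_cons]
    · grind
    · tauto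

theorem foldl_appendIfNotMem_of_subset :
    ∀ {l acc : List α}, l ⊆ acc → l.foldl appendIfNotMem acc = acc
  | [], _, _ => rfl
  | b :: l, acc, h => by
    rw [List.cons_subset] at h
    rw [List.foldl_cons, appendIfNotMem, if_pos h.1, foldl_appendIfNotMem_of_subset h.2]

theorem foldl_appendIfNotMem_foldl (acc : List α) :
    ∀ {l acc' : List α}, (l.foldl appendIfNotMem acc').foldl appendIfNotMem acc =
      l.foldl appendIfNotMem (acc'.foldl appendIfNotMem acc)
  | [], _ => rfl
  | a :: l, acc' => by
    rw [List.foldl_cons, List.foldl_cons, foldl_appendIfNotMem_foldl]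
    congr 1
    by_cases ha : a ∈ acc'
    · have : a ∈ acc'.foldl appendIfNotMem acc := mem_foldl_appendIfNotMem.2 (Or.inr ha)
      rw [appendIfNotMem, appendIfNotMem, if_pos ha, if_pos this]
    · rw [appendIfNotMem, if_neg ha, List.foldl_append]
      rfl

end AppendIfNotMem

theorem toList_ini (w : F) : toList (ini w) = (toList w).foldl appendIfNotMem [] := rfl

theorem toList_ini_mul (u v : F) :
    toList (ini (u * v)) = (toList v).foldl appendIfNotMem (toList (ini u)) := by
  rw [toList_ini, toList_mul, List.foldl_append, toList_ini]

theorem foldl_appendIfNotMem_toList_ini (acc : List ℕ) (w : F) :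
    (toList (ini w)).foldl appendIfNotMem acc = (toList w).foldl appendIfNotMem acc := by
  rw [toList_ini, foldl_appendIfNotMem_foldl]
  rfl

theorem ini_ini_mul_ini (u v : F) : ini (ini u * ini v) = ini (u * v) := by
  apply toList.injective
  rw [toList_ini_mul, toList_ini_mul, foldl_appendIfNotMem_toList_ini, toList_ini (ini u),
    foldl_appendIfNotMem_toList_ini]
  rfl

theorem ini_mul_mul_self (a b : F) : ini (a * b * a) = ini (a * b) := by
  apply toList.injective
  rw [toList_ini_mul]
  refine foldl_appendIfNotMem_of_subset fun c hc => ?_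
  rw [toList_ini, mem_foldl_appendIfNotMem, toList_mul]
  exact Or.inr (List.mem_append_left _ hc)

def iniCon : Con F where
  r u v := ini u = ini v
  iseqv := ⟨fun _ => rfl, Eq.symm, Eq.trans⟩
  mul' {u u' v v'} (hu : ini u = ini u') (hv : ini v = ini v') := by
    rw [← ini_ini_mul_ini, hu, hv, ini_ini_mul_ini]

theorem fic_le {S : Set (F × F)} {c : FICon} (h : ∀ p ∈ S, c.1 p.1 p.2) : (fic S).1 ≤ c.1 :=
  Subtype.coe_le_coe.2 (sInf_le h)

theorem fic_rel_of_mem_s8 {S : Set (F × F)} {p : F × F} (hp : p ∈ S) : (fic S).1 p.1 p.2 :=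
  fun _ ⟨_, hc, hc_eq⟩ => hc_eq ▸ hc p hp

theorem isFullyInvariant_conGen {r : F → F → Prop}
    (hr : ∀ ξ : F →* F, ∀ u v, r u v → r (ξ u) (ξ v)) : IsFullyInvariant (conGen r) := by
  intro ξ
  suffices conGen r ≤ (conGen r).comap ξ (map_mul ξ) from fun u v h => this h
  exact Con.conGen_le.2 fun u v h => ConGen.Rel.of _ _ (hr ξ u v h)

def LRBInstance (u v : F) : Prop := ∃ a b : F, u = a * b ∧ v = a * b * a

theorem isFullyInvariant_conGen_LRBInstance : IsFullyInvariant (conGen LRBInstance) :=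
  isFullyInvariant_conGen fun ξ _ _ ⟨a, b, hu, hv⟩ =>
    ⟨ξ a, ξ b, by rw [hu, map_mul], by rw [hv, map_mul, map_mul]⟩

theorem conGen_LRBInstance_le_iniCon : conGen LRBInstance ≤ iniCon :=
  Con.conGen_le.2 fun _ _ ⟨a, b, hu, hv⟩ => by
    change ini _ = ini _
    rw [hu, hv, ini_mul_mul_self]

theorem IsFullyInvariant.rel_mul_mul_self {c : Con F} (hc : IsFullyInvariant c)
    (hxy : c (x * y) (x * y * x)) (a b : F) : c (a * b) (a * b * a) := by
  simpa [x, y] using hc (lift fun n => if n = 0 then a else if n = 1 then b else 1) _ _ hxy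

section LeftRegular

variable {c : Con F} (hc : ∀ a b : F, c (a * b) (a * b * a))
include hc

theorem rel_mul_of_of_mem {w : F} {a : ℕ} (ha : a ∈ toList w) : c (w * of a) w := by
  obtain ⟨s, t, hst⟩ := List.append_of_mem ha
  have hw : w = ofList s * (of a * ofList t) := by
    rw [← ofList_toList w, hst]
    rfl
  rw [hw, mul_assoc, mul_assoc, ← mul_assoc (of a)]
  exact c.mul (c.refl _) (c.symm (hc _ _))

theorem rel_foldl_appendIfNotMem :
    ∀ (l acc : List ℕ), c (ofList acc * ofList l) (ofList (l.foldl appendIfNotMem acc))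
  | [], acc => by simpa using c.refl (ofList acc)
  | a :: l, acc => by
    rw [List.foldl_cons, ofList_cons, ← mul_assoc, appendIfNotMem]
    split_ifs with ha
    · exact c.trans (c.mul (rel_mul_of_of_mem hc ha) (c.refl _))
        (rel_foldl_appendIfNotMem l acc)
    · rw [← ofList_singleton, ← ofList_append]
      exact rel_foldl_appendIfNotMem l _

theorem rel_ini (w : F) : c w (ini w) := by
  have h := rel_foldl_appendIfNotMem hc (toList w) []
  rwa [ofList_nil, one_mul, ofList_toList] at h

end LeftRegular

/-- An identity `u ≈ v` holds in `LRB` if and only if `ini u = ini v`. -/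
theorem sigmaLRB_iff_ini (u v : F) : sigmaLRB.1 u v ↔ ini u = ini v := by
  constructor
  · intro h
    have hle : sigmaLRB.1 ≤ conGen LRBInstance :=
      fic_le (c := ⟨_, isFullyInvariant_conGen_LRBInstance⟩) fun _ hp =>
        hp ▸ ConGen.Rel.of _ _ ⟨x, y, rfl, rfl⟩
    exact conGen_LRBInstance_le_iniCon (hle h)
  · intro h
    have hσ := sigmaLRB.2.rel_mul_mul_self (fic_rel_of_mem_s8 (Set.mem_singleton _))
    exact sigmaLRB.1.trans (rel_ini hσ u) (h ▸ sigmaLRB.1.symm (rel_ini hσ v))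
end

section
/- For every n ≥ 1, the set A = {w ∈ F : every letter occurring in w is x or y, the number of occurrences of x in w is n+1, and the number of occurrences of y in w is n} is an anti-chain under the quasi-order ⪯: for all u, v ∈ A, if u ⪯ v then u = v. -/
/-- The quasi-order `⪯`: `u ⪯ v` iff `v = a * ξ u * b` for some words `a, b`
and some endomorphism `ξ` of `F` sending every generator to a nonempty word
(i.e. an endomorphism of the free semigroup). -/
def Prec (u v : F) : Prop :=
  ∃ (a b : F) (ξ : F →* F), (∀ k : ℕ, ξ (FreeMonoid.of k) ≠ 1) ∧ v = a * ξ u * b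

namespace List

variable {α : Type*} [DecidableEq α] {l : List α} {a b : α}

theorem length_eq_count_add_count (hl : ∀ c ∈ l, c = a ∨ c = b) (hab : a ≠ b) :
    l.length = l.count a + l.count b := by
  rw [length_eq_countP_add_countP (· == a), count_eq_countP, count_eq_countP]
  congr 1
  refine countP_congr fun c hc => ?_
  rcases hl c hc with rfl | rfl <;> simp [hab, Ne.symm hab]

theorem map_eq_self_of_count_map_eq {g : α → α} (hl : ∀ c ∈ l, c = a ∨ c = b)
    (hlt : l.count b < l.count a) (ha : (l.map g).count a = l.count a)
    (hb : (l.map g).count b = l.count b) : l.map g = l := by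
  have hab : a ≠ b := by rintro rfl; omega
  have hga : g a = a := by
    by_contra hne
    have : (l.map g).count a ≤ l.count b := by
      rw [count_eq_countP, countP_map, count_eq_countP]
      refine countP_mono_left fun c hc hgc => ?_
      rcases hl c hc with rfl | rfl <;> simp_all
    omega
  have hgb : b ∈ l → g b = b := by
    intro hbl
    by_contra hne
    have : (l.map g).count b = 0 := by
      refine count_eq_zero.2 fun hmem => ?_
      obtain ⟨c, hc, hgc⟩ := mem_map.1 hmem
      rcases hl c hc with rfl | rfl <;> simp_all
    have := count_pos_iff.2 hbl
    omega
  refine (map_congr_left fun c hc => ?_).trans (map_id l)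
  rcases hl c hc with rfl | rfl
  exacts [hga, hgb hc]

end List

namespace FreeMonoid

variable {α β : Type*}

theorem length_pos_of_ne_one {w : FreeMonoid α} (hw : w ≠ 1) : 0 < w.length :=
  Nat.pos_of_ne_zero (mt length_eq_zero.1 hw)

variable {ξ : FreeMonoid α →* FreeMonoid β}

theorem length_le_length_apply (hξ : ∀ c, ξ (of c) ≠ 1) (w : FreeMonoid α) :
    w.length ≤ (ξ w).length := by
  induction w using FreeMonoid.inductionOn' with
  | one => simp
  | of_mul c w ih =>
    have := length_pos_of_ne_one (hξ c)
    rw [map_mul, length_mul, length_mul, length_of]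
    omega

theorem exists_eq_map_of_length_apply_le (hξ : ∀ c, ξ (of c) ≠ 1) {w : FreeMonoid α}
    (h : (ξ w).length ≤ w.length) : ∃ g : α → β, ξ w = map g w := by
  let g c : β := (ξ (of c)).toList.head fun hnil => hξ c (toList.injective hnil)
  refine ⟨g, ?_⟩
  induction w using FreeMonoid.inductionOn' with
  | one => simp
  | of_mul c w ih =>
    have hw := length_le_length_apply hξ w
    have hc := length_pos_of_ne_one (hξ c)
    rw [map_mul, length_mul, length_mul, length_of] at h
    obtain ⟨d, hd⟩ := length_eq_one.1 (show (ξ (of c)).length = 1 by omega)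
    rw [map_mul, map_mul, ih (by omega), map_of]
    congr 1
    simp only [g, hd]
    rfl

end FreeMonoid

theorem Prec.exists_eq_map {u v : F} (h : Prec u v) (hlen : v.length ≤ u.length) :
    ∃ g : ℕ → ℕ, v = FreeMonoid.map g u := by
  obtain ⟨a, b, ξ, hξ, rfl⟩ := h
  have hu := FreeMonoid.length_le_length_apply hξ u
  simp only [FreeMonoid.length_mul] at hlen
  obtain rfl : a = 1 := FreeMonoid.length_eq_zero.1 (by omega)
  obtain rfl : b = 1 := FreeMonoid.length_eq_zero.1 (by omega)
  simp only [one_mul, mul_one] at hlen ⊢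
  exact FreeMonoid.exists_eq_map_of_length_apply_le hξ (by omega)

theorem antichain_occ_general (n : ℕ) (u v : F)
    (hu : (∀ a ∈ FreeMonoid.toList u, a = 0 ∨ a = 1) ∧
      (FreeMonoid.toList u).count 0 = n + 1 ∧ (FreeMonoid.toList u).count 1 = n)
    (hv : (∀ a ∈ FreeMonoid.toList v, a = 0 ∨ a = 1) ∧
      (FreeMonoid.toList v).count 0 = n + 1 ∧ (FreeMonoid.toList v).count 1 = n)
    (huv : Prec u v) : u = v := by
  obtain ⟨hu01, hu0, hu1⟩ := hu
  obtain ⟨hv01, hv0, hv1⟩ := hv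
  have hlen : v.length ≤ u.length := by
    rw [FreeMonoid.length, FreeMonoid.length, List.length_eq_count_add_count hu01 zero_ne_one,
      List.length_eq_count_add_count hv01 zero_ne_one, hu0, hu1, hv0, hv1]
  obtain ⟨g, rfl⟩ := huv.exists_eq_map hlen
  rw [FreeMonoid.toList_map] at hv0 hv1
  refine FreeMonoid.toList.injective (List.map_eq_self_of_count_map_eq hu01 ?_ ?_ ?_).symm
  · omega
  · rw [hv0, hu0]
  · rw [hv1, hu1]

/-- For every `n ≥ 1`, the set of words over the letters `x, y` containing
exactly `n + 1` occurrences of `x` and exactly `n` occurrences of `y` is an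
anti-chain under the quasi-order `⪯`. -/
theorem antichain_occ (n : ℕ) (hn : 1 ≤ n) (u v : F)
    (hu : (∀ a ∈ FreeMonoid.toList u, a = 0 ∨ a = 1) ∧
      (FreeMonoid.toList u).count 0 = n + 1 ∧ (FreeMonoid.toList u).count 1 = n)
    (hv : (∀ a ∈ FreeMonoid.toList v, a = 0 ∨ a = 1) ∧
      (FreeMonoid.toList v).count 0 = n + 1 ∧ (FreeMonoid.toList v).count 1 = n)
    (huv : Prec u v) : u = v :=
  antichain_occ_general n u v hu hv huv
end
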